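/- arXiv:1701.04028 — 2 statements merged into one kernel-verified Lean document; each statement's English description precedes it below -/
import Mathlib

section
/- If a code φ : Aⁿ → {0,1}* is uniquely decodable (i.e., the concatenation map on finite sequences of codewords is injective), then the codeword lengths satisfy the Kraft inequality: ∑_{u ∈ Aⁿ} 2^(−|φ(u)|) ≤ 1. -/
/-!
The image of `φ` is a uniquely decodable code over the binary alphabet, and `φ` is injective
(compare one-word messages), so the sum is the Kraft sum of that code, which McMillan's
inequality bounds by `1`.
-/

open Finset InformationTheory

section

variable {α β : Type*} {φ : β → List α}

lemma Function.Injective.of_flatten_map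
    (hφ : Function.Injective fun L : List β => (L.map φ).flatten) : Function.Injective φ :=
  fun a b h => List.singleton_injective (hφ (by simpa using h))

lemma uniquelyDecodable_range_of_injective_flatten_map
    (hφ : Function.Injective fun L : List β => (L.map φ).flatten) :
    UniquelyDecodable (Set.range φ) := by
  intro W₁ W₂ hW₁ hW₂ hflat
  obtain ⟨L₁, rfl⟩ : W₁ ∈ Set.range (List.map φ) := by rwa [Set.range_list_map]
  obtain ⟨L₂, rfl⟩ : W₂ ∈ Set.range (List.map φ) := by rwa [Set.range_list_map]
  rw [hφ hflat]

theorem kraft_mcmillan_of_injective_flatten_map [Fintype α] [Nonempty α] [Fintype β]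
    (hφ : Function.Injective fun L : List β => (L.map φ).flatten) :
    ∑ b, (1 / Fintype.card α : ℝ) ^ (φ b).length ≤ 1 := by
  classical
  have hcode : UniquelyDecodable ((univ.image φ : Finset (List α)) : Set (List α)) := by
    rw [coe_image, coe_univ, Set.image_univ]
    exact uniquelyDecodable_range_of_injective_flatten_map hφ
  calc ∑ b, (1 / Fintype.card α : ℝ) ^ (φ b).length
      = ∑ w ∈ univ.image φ, (1 / Fintype.card α : ℝ) ^ w.length :=
        by rw [sum_image fun a _ b _ h => hφ.of_flatten_map h]
    _ ≤ 1 := kraft_mcmillan_inequality hcode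

end

theorem kraft_of_uniquely_decodable_general {A : Type*} [Fintype A] (n : ℕ)
    (φ : (Fin n → A) → List Bool)
    (hUD : ∀ L₁ L₂ : List (Fin n → A), (L₁.map φ).flatten = (L₂.map φ).flatten → L₁ = L₂) :
    ∑ u : Fin n → A, (2 : ℝ) ^ (-((φ u).length : ℤ)) ≤ 1 := by
  have h := kraft_mcmillan_of_injective_flatten_map (α := Bool) (φ := φ) fun L₁ L₂ => hUD L₁ L₂
  simpa [Fintype.card_bool, zpow_neg, inv_pow] using h

/-- Kraft inequality for uniquely decodable codes: if the concatenation of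
codewords determines the sequence of source words, then
`∑_{u ∈ Aⁿ} 2^{-|φ u|} ≤ 1`. -/
theorem kraft_of_uniquely_decodable {A : Type*} [Fintype A] (n : ℕ) (hn : 1 ≤ n)
    (φ : (Fin n → A) → List Bool)
    (hUD : ∀ L₁ L₂ : List (Fin n → A), (L₁.map φ).flatten = (L₂.map φ).flatten → L₁ = L₂) :
    ∑ u : Fin n → A, (2 : ℝ) ^ (-((φ u).length : ℤ)) ≤ 1 :=
  kraft_of_uniquely_decodable_general n φ hUD
end

section
/- Let μ_x and μ_y be stationary measures with memory at most M on a finite alphabet A, with all M-th order conditional probabilities of μ_y positive. Then for all m > M and all pasts x_{−t}…x₀, y_{−k}…y₀ (t, k ≥ M), the expected log-likelihood ratio ∑_{w∈Aᵐ} μ_x(w) log(μ_x(w | x_{−t}…x₀)/μ_y(w | y_{−k}…y₀)) equals (m − M)·λ + r(x,y,m), where λ = ∑_{v∈A^M} μ_x(v) ∑_{a∈A} μ_x(a|v) log(μ_x(a|v)/μ_y(a|v)) and |r| is bounded by a constant depending only on M, A, μ_x, μ_y (not on m, t, k). -/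
/-- Conditional probability of the next letter `a` given the preceding word `u`. -/
noncomputable def condProb {A : Type*} (μ : List A → ℝ) (a : A) (u : List A) : ℝ :=
  μ (u ++ [a]) / μ u

/-- The last `M` letters of a word. -/
def lastN {A : Type*} (M : ℕ) (u : List A) : List A :=
  u.drop (u.length - M)

/-!
By the chain rule, appending a letter `a` to `w` adds
`log μx(a | px w) - log μy(a | py w)` to the log-likelihood ratio. Once `|w| ≥ M`, finite memory
makes this increment depend only on `w` (indeed on its last `M` letters), and stationarity of `μx`
turns its `μx`-average over `w a` into `λ`. So the expectation grows by exactly `λ` per letter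
beyond `M`, and the remainder is the expectation at `m = M`. That one is bounded because every
conditional probability with a context of length `≥ M` is one of finitely many positive numbers.
-/

open Finset Real

section Memory

variable {A : Type*}

def HasMemory (M : ℕ) (μ : List A → ℝ) : Prop :=
  ∀ (u : List A) (a : A), M ≤ u.length → condProb μ a u = condProb μ a (lastN M u)

lemma lastN_append_of_le_length (M : ℕ) (u l : List A) (h : M ≤ l.length) :
    lastN M (u ++ l) = lastN M l := by
  rw [lastN, lastN, List.length_append,
    show u.length + l.length - M = u.length + (l.length - M) by omega, List.drop_append]
  simp

lemma length_lastN_of_le_length (M : ℕ) (l : List A) (h : M ≤ l.length) :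
    (lastN M l).length = M := by
  rw [lastN, List.length_drop]
  omega

lemma HasMemory.condProb_append {M : ℕ} {μ : List A → ℝ} (hμ : HasMemory M μ) (a : A)
    (u w : List A) (hw : M ≤ w.length) : condProb μ a (u ++ w) = condProb μ a w := by
  rw [hμ _ _ (by simp only [List.length_append]; omega), lastN_append_of_le_length M u w hw,
    ← hμ _ _ hw]

lemma HasMemory.exists_abs_log_condProb_le [Finite A] {M : ℕ} {μ : List A → ℝ}
    (hμ : HasMemory M μ) :
    ∃ c, ∀ (a : A) (u : List A), M ≤ u.length → |log (condProb μ a u)| ≤ c := by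
  obtain ⟨c, hc⟩ :=
    Finite.exists_le fun p : List.Vector A M × A => |log (condProb μ p.2 p.1.toList)|
  exact ⟨c, fun a u hu => (hμ u a hu).symm ▸ hc (⟨lastN M u, length_lastN_of_le_length M u hu⟩, a)⟩

lemma condProb_pos {μ : List A → ℝ} (hpos : ∀ u, 0 < μ u) (a : A) (u : List A) :
    0 < condProb μ a u :=
  div_pos (hpos _) (hpos _)

lemma log_div_append_singleton {μ : List A → ℝ} (hpos : ∀ u, 0 < μ u) (p w : List A) (a : A) :
    log (μ (p ++ (w ++ [a])) / μ p) = log (μ (p ++ w) / μ p) + log (condProb μ a (p ++ w)) := by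
  have hchain : μ (p ++ (w ++ [a])) / μ p = μ (p ++ w) / μ p * condProb μ a (p ++ w) := by
    rw [condProb, ← List.append_assoc, mul_comm, div_mul_div_cancel₀ (hpos _).ne']
  rw [hchain, log_mul (div_pos (hpos _) (hpos _)).ne' (condProb_pos hpos a _).ne']

end Memory

section Sums

variable {A : Type*} [Fintype A]

lemma sum_ofFn_succ_eq_sum_sum_append {β : Type*} [AddCommMonoid β] (m : ℕ) (f : List A → β) :
    ∑ w : Fin (m + 1) → A, f (List.ofFn w) = ∑ w : Fin m → A, ∑ a : A, f (List.ofFn w ++ [a]) := by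
  rw [← (Fin.snocEquiv fun _ => A).sum_comp, Fintype.sum_prod_type, sum_comm]
  refine sum_congr rfl fun w _ => sum_congr rfl fun a _ => ?_
  rw [List.ofFn_succ']
  simp [Fin.snocEquiv, List.concat_eq_append]

lemma sum_ofFn_succ_eq_sum_sum_cons {β : Type*} [AddCommMonoid β] (m : ℕ) (f : List A → β) :
    ∑ w : Fin (m + 1) → A, f (List.ofFn w) = ∑ a : A, ∑ w : Fin m → A, f (a :: List.ofFn w) := by
  rw [← (Fin.consEquiv fun _ => A).sum_comp, Fintype.sum_prod_type]
  simp [Fin.consEquiv, List.ofFn_succ]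

lemma sum_ofFn_eq_nil {μ : List A → ℝ} (hstat : ∀ u, μ u = ∑ a : A, μ (a :: u)) (m : ℕ) :
    ∑ w : Fin m → A, μ (List.ofFn w) = μ [] := by
  induction m with
  | zero => simp
  | succ m ih => rw [sum_ofFn_succ_eq_sum_sum_cons, sum_comm, ← ih]; simp only [← hstat]

/-- Stationarity: a function of the last `M` letters has the same average over `A^n` as over
`A^M`. -/
lemma sum_sum_append_mul_eq_of_stationary {μ : List A → ℝ}
    (hstat : ∀ u, μ u = ∑ a : A, μ (a :: u)) {M n : ℕ} (hMn : M ≤ n) (g : List A → A → ℝ)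
    (hg : ∀ (b : A) (w : List A) (a : A), M ≤ w.length → g (b :: w) a = g w a) :
    ∑ w : Fin n → A, ∑ a : A, μ (List.ofFn w ++ [a]) * g (List.ofFn w) a =
      ∑ v : Fin M → A, ∑ a : A, μ (List.ofFn v ++ [a]) * g (List.ofFn v) a := by
  induction n, hMn using Nat.le_induction with
  | base => rfl
  | succ n hn ih =>
    rw [sum_ofFn_succ_eq_sum_sum_cons n fun l => ∑ a, μ (l ++ [a]) * g l a, sum_comm, ← ih]
    refine sum_congr rfl fun w _ => ?_
    have hlen : M ≤ (List.ofFn w).length := by simpa using hn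
    rw [sum_comm]
    refine sum_congr rfl fun a _ => ?_
    simp only [List.cons_append, hg _ _ a hlen, ← sum_mul, ← hstat]

end Sums

section LogLikelihood

variable {A : Type*} (μx μy : List A → ℝ)

noncomputable def logLikelihoodRatio (px py w : List A) : ℝ :=
  log ((μx (px ++ w) / μx px) / (μy (py ++ w) / μy py))

variable {μx μy}

lemma logLikelihoodRatio_append_singleton (hxpos : ∀ u, 0 < μx u) (hypos : ∀ u, 0 < μy u)
    (px py w : List A) (a : A) :
    logLikelihoodRatio μx μy px py (w ++ [a]) = logLikelihoodRatio μx μy px py w +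
      log (condProb μx a (px ++ w)) - log (condProb μy a (py ++ w)) := by
  simp only [logLikelihoodRatio]
  rw [log_div (div_pos (hxpos _) (hxpos _)).ne' (div_pos (hypos _) (hypos _)).ne',
    log_div (div_pos (hxpos _) (hxpos _)).ne' (div_pos (hypos _) (hypos _)).ne',
    log_div_append_singleton hxpos, log_div_append_singleton hypos]
  ring

lemma logLikelihoodRatio_append_singleton_of_hasMemory {M : ℕ} (hxpos : ∀ u, 0 < μx u)
    (hypos : ∀ u, 0 < μy u) (hx : HasMemory M μx) (hy : HasMemory M μy) (px py : List A)
    {w : List A} (hw : M ≤ w.length) (a : A) :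
    logLikelihoodRatio μx μy px py (w ++ [a]) = logLikelihoodRatio μx μy px py w +
      log (condProb μx a w / condProb μy a w) := by
  rw [logLikelihoodRatio_append_singleton hxpos hypos, hx.condProb_append a px w hw,
    hy.condProb_append a py w hw, log_div (condProb_pos hxpos a w).ne' (condProb_pos hypos a w).ne']
  ring

lemma abs_logLikelihoodRatio_le {M : ℕ} (hxpos : ∀ u, 0 < μx u) (hypos : ∀ u, 0 < μy u)
    {cx cy : ℝ} (hcx : ∀ (a : A) (u : List A), M ≤ u.length → |log (condProb μx a u)| ≤ cx)
    (hcy : ∀ (a : A) (u : List A), M ≤ u.length → |log (condProb μy a u)| ≤ cy)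
    {px py : List A} (hpx : M ≤ px.length) (hpy : M ≤ py.length) (w : List A) :
    |logLikelihoodRatio μx μy px py w| ≤ w.length * (cx + cy) := by
  induction w using List.reverseRecOn with
  | nil => simp [logLikelihoodRatio, div_self (hxpos px).ne', div_self (hypos py).ne']
  | append_singleton w a ih =>
    have hx := abs_le.mp (hcx a (px ++ w) (by simp only [List.length_append]; omega))
    have hy := abs_le.mp (hcy a (py ++ w) (by simp only [List.length_append]; omega))
    have ih := abs_le.mp ih
    rw [logLikelihoodRatio_append_singleton hxpos hypos, List.length_append,
      List.length_singleton, abs_le]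
    push_cast
    constructor <;> linarith

end LogLikelihood

section Expectation

variable {A : Type*} [Fintype A] (M : ℕ) (μx μy : List A → ℝ)

noncomputable def expectedLogLikelihoodRatio (m : ℕ) (px py : List A) : ℝ :=
  ∑ w : Fin m → A, μx (List.ofFn w) * logLikelihoodRatio μx μy px py (List.ofFn w)

noncomputable def divergenceRate : ℝ :=
  ∑ v : Fin M → A, ∑ a : A, μx (List.ofFn v ++ [a]) *
    log (condProb μx a (List.ofFn v) / condProb μy a (List.ofFn v))

variable {M μx μy}

lemma expectedLogLikelihoodRatio_succ (hxpos : ∀ u, 0 < μx u) (hypos : ∀ u, 0 < μy u)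
    (hxcons : ∀ u, μx u = ∑ a : A, μx (u ++ [a])) (hxstat : ∀ u, μx u = ∑ a : A, μx (a :: u))
    (hx : HasMemory M μx) (hy : HasMemory M μy) {m : ℕ} (hm : M ≤ m) (px py : List A) :
    expectedLogLikelihoodRatio μx μy (m + 1) px py =
      expectedLogLikelihoodRatio μx μy m px py + divergenceRate M μx μy := by
  rw [expectedLogLikelihoodRatio,
    sum_ofFn_succ_eq_sum_sum_append m fun l => μx l * logLikelihoodRatio μx μy px py l]
  have hstep : ∀ (w : Fin m → A) (a : A),
      μx (List.ofFn w ++ [a]) * logLikelihoodRatio μx μy px py (List.ofFn w ++ [a]) =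
        μx (List.ofFn w ++ [a]) * logLikelihoodRatio μx μy px py (List.ofFn w) +
          μx (List.ofFn w ++ [a]) *
            log (condProb μx a (List.ofFn w) / condProb μy a (List.ofFn w)) :=
    fun w a => by
      rw [logLikelihoodRatio_append_singleton_of_hasMemory hxpos hypos hx hy px py
        (by simpa using hm), mul_add]
  simp only [hstep, sum_add_distrib]
  congr 1
  · simp only [← sum_mul, ← hxcons, expectedLogLikelihoodRatio]
  · refine sum_sum_append_mul_eq_of_stationary hxstat hm
      (fun w a => log (condProb μx a w / condProb μy a w)) fun b w a hw => ?_
    rw [← List.singleton_append, hx.condProb_append a _ w hw, hy.condProb_append a _ w hw]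

lemma expectedLogLikelihoodRatio_eq_add_mul (hxpos : ∀ u, 0 < μx u) (hypos : ∀ u, 0 < μy u)
    (hxcons : ∀ u, μx u = ∑ a : A, μx (u ++ [a])) (hxstat : ∀ u, μx u = ∑ a : A, μx (a :: u))
    (hx : HasMemory M μx) (hy : HasMemory M μy) {m : ℕ} (hm : M ≤ m) (px py : List A) :
    expectedLogLikelihoodRatio μx μy m px py =
      expectedLogLikelihoodRatio μx μy M px py + ((m : ℝ) - M) * divergenceRate M μx μy := by
  induction m, hm using Nat.le_induction with
  | base => simp
  | succ m hm ih =>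
    rw [expectedLogLikelihoodRatio_succ hxpos hypos hxcons hxstat hx hy hm, ih]
    push_cast
    ring

lemma abs_expectedLogLikelihoodRatio_le (hxpos : ∀ u, 0 < μx u) (hypos : ∀ u, 0 < μy u)
    (hxstat : ∀ u, μx u = ∑ a : A, μx (a :: u)) {cx cy : ℝ}
    (hcx : ∀ (a : A) (u : List A), M ≤ u.length → |log (condProb μx a u)| ≤ cx)
    (hcy : ∀ (a : A) (u : List A), M ≤ u.length → |log (condProb μy a u)| ≤ cy)
    {px py : List A} (hpx : M ≤ px.length) (hpy : M ≤ py.length) (m : ℕ) :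
    |expectedLogLikelihoodRatio μx μy m px py| ≤ μx [] * (m * (cx + cy)) := by
  calc |expectedLogLikelihoodRatio μx μy m px py|
      ≤ ∑ w : Fin m → A, μx (List.ofFn w) * |logLikelihoodRatio μx μy px py (List.ofFn w)| := by
        refine (abs_sum_le_sum_abs _ _).trans_eq (sum_congr rfl fun w _ => ?_)
        rw [abs_mul, abs_of_pos (hxpos _)]
    _ ≤ ∑ w : Fin m → A, μx (List.ofFn w) * (m * (cx + cy)) := by
        refine sum_le_sum fun w _ => mul_le_mul_of_nonneg_left ?_ (hxpos _).le
        simpa using abs_logLikelihoodRatio_le hxpos hypos hcx hcy hpx hpy (List.ofFn w)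
    _ = μx [] * (m * (cx + cy)) := by rw [← sum_mul, sum_ofFn_eq_nil hxstat]

end Expectation

theorem expected_log_likelihood_ratio_general {A : Type*} [Fintype A] (M : ℕ)
    (μx μy : List A → ℝ)
    (hxpos : ∀ u, 0 < μx u) (hypos : ∀ u, 0 < μy u)
    (hxcons : ∀ u : List A, μx u = ∑ a : A, μx (u ++ [a]))
    (hxstat : ∀ u : List A, μx u = ∑ a : A, μx (a :: u))
    (hxmem : ∀ (u : List A) (a : A), M ≤ u.length → condProb μx a u = condProb μx a (lastN M u))
    (hymem : ∀ (u : List A) (a : A), M ≤ u.length → condProb μy a u = condProb μy a (lastN M u)) :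
    ∃ C : ℝ, ∀ (m t k : ℕ), M < m → M ≤ t → M ≤ k →
      ∀ px py : List A, px.length = t + 1 → py.length = k + 1 →
      |(∑ w : Fin m → A, μx (List.ofFn w) *
            Real.log ((μx (px ++ List.ofFn w) / μx px) / (μy (py ++ List.ofFn w) / μy py))) -
          ((m : ℝ) - (M : ℝ)) *
            (∑ v : Fin M → A, ∑ a : A, μx (List.ofFn v ++ [a]) *
              Real.log (condProb μx a (List.ofFn v) / condProb μy a (List.ofFn v)))| ≤ C := by
  obtain ⟨cx, hcx⟩ := HasMemory.exists_abs_log_condProb_le hxmem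
  obtain ⟨cy, hcy⟩ := HasMemory.exists_abs_log_condProb_le hymem
  refine ⟨μx [] * (M * (cx + cy)), fun m t k hm ht hk px py hpx hpy => ?_⟩
  change |expectedLogLikelihoodRatio μx μy m px py - ((m : ℝ) - M) * divergenceRate M μx μy| ≤ _
  rw [expectedLogLikelihoodRatio_eq_add_mul hxpos hypos hxcons hxstat hxmem hymem hm.le,
    add_sub_cancel_right]
  exact abs_expectedLogLikelihoodRatio_le hxpos hypos hxstat hcx hcy (by omega) (by omega) M

/-- For stationary measures `μx, μy` with memory at most `M` (and positive word
probabilities), the expected conditional log-likelihood ratio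
`∑_{w ∈ Aᵐ} μx(w) log (μx(w|x_{-t}…x₀) / μy(w|y_{-k}…y₀))` equals
`(m - M)·λ` up to a remainder bounded uniformly in `m, t, k` and the pasts,
where `λ = ∑_{v ∈ A^M} μx(v) ∑_{a ∈ A} μx(a|v) log (μx(a|v)/μy(a|v))`
(each weighted summand written as `μx(va) log (…)`). -/
theorem expected_log_likelihood_ratio {A : Type*} [Fintype A] (M : ℕ)
    (μx μy : List A → ℝ)
    (hxpos : ∀ u, 0 < μx u) (hypos : ∀ u, 0 < μy u)
    (hxnil : μx [] = 1) (hynil : μy [] = 1)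
    (hxcons : ∀ u : List A, μx u = ∑ a : A, μx (u ++ [a]))
    (hycons : ∀ u : List A, μy u = ∑ a : A, μy (u ++ [a]))
    (hxstat : ∀ u : List A, μx u = ∑ a : A, μx (a :: u))
    (hystat : ∀ u : List A, μy u = ∑ a : A, μy (a :: u))
    (hxmem : ∀ (u : List A) (a : A), M ≤ u.length → condProb μx a u = condProb μx a (lastN M u))
    (hymem : ∀ (u : List A) (a : A), M ≤ u.length → condProb μy a u = condProb μy a (lastN M u)) :
    ∃ C : ℝ, ∀ (m t k : ℕ), M < m → M ≤ t → M ≤ k →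
      ∀ px py : List A, px.length = t + 1 → py.length = k + 1 →
      |(∑ w : Fin m → A, μx (List.ofFn w) *
            Real.log ((μx (px ++ List.ofFn w) / μx px) / (μy (py ++ List.ofFn w) / μy py))) -
          ((m : ℝ) - (M : ℝ)) *
            (∑ v : Fin M → A, ∑ a : A, μx (List.ofFn v ++ [a]) *
              Real.log (condProb μx a (List.ofFn v) / condProb μy a (List.ofFn v)))| ≤ C :=
  expected_log_likelihood_ratio_general M μx μy hxpos hypos hxcons hxstat hxmem hymem
end
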